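/- Suppose a finite multiset equality {ν^{sᵢ}π, …, ν^{eᵢ}π}_{i=1..c} = {π, νπ, …, ν^{l−1}π} holds where segments [sᵢ,eᵢ] are pairwise non-linked, s₁ = 0, and eᵢ ≤ e₁ for every i with sᵢ = 0. If additionally each segment has length ≤ l, then e₁ = l − 1, and every segment [sᵢ, eᵢ] is contained in [0, l−1] with eᵢ ≤ e₁. -/
import Mathlib


/-- Two integer segments `[s₁,e₁]`, `[s₂,e₂]` are linked if neither contains the other
but their union is a segment (an integer interval). -/
def Linked (s1 e1 s2 e2 : ℤ) : Prop :=
  ¬ (Finset.Icc s1 e1 ⊆ Finset.Icc s2 e2) ∧ ¬ (Finset.Icc s2 e2 ⊆ Finset.Icc s1 e1) ∧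
  ∃ a b : ℤ, Finset.Icc s1 e1 ∪ Finset.Icc s2 e2 = Finset.Icc a b

/-- pairwise non-linked segments `[sᵢ,eᵢ]` with `s₁ = 0`, `eᵢ ≤ e₁`
whenever `sᵢ = 0`, each of length `≤ l`, whose multiset union is `{0,…,l−1}`, satisfy
`e₁ = l − 1` and every segment is contained in `[0, l−1]` with `eᵢ ≤ e₁`. -/
theorem stmt_16 (c : ℕ) (hc : 0 < c) (l : ℤ) (hl : 1 ≤ l)
    (s e : Fin c → ℤ) (hse : ∀ i, s i ≤ e i)
    (hs0 : s ⟨0, hc⟩ = 0)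
    (hmax : ∀ i, s i = 0 → e i ≤ e ⟨0, hc⟩)
    (hlen : ∀ i, e i - s i + 1 ≤ l)
    (hnl : ∀ i j, i ≠ j → ¬ Linked (s i) (e i) (s j) (e j))
    (hmulti : ∑ i : Fin c, (Finset.Icc (s i) (e i)).val = (Finset.Icc 0 (l - 1)).val) :
    e ⟨0, hc⟩ = l - 1 ∧ ∀ i, 0 ≤ s i ∧ e i ≤ e ⟨0, hc⟩ := by
  -- every segment is contained in [0, l-1]
  have key : ∀ i, Finset.Icc (s i) (e i) ⊆ Finset.Icc 0 (l - 1) := by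
    intro i x hx
    have hle : (Finset.Icc (s i) (e i)).val ≤ ∑ j : Fin c, (Finset.Icc (s j) (e j)).val :=
      Finset.single_le_sum (fun j _ => Multiset.zero_le _) (Finset.mem_univ i)
    rw [hmulti] at hle
    exact Multiset.mem_of_le hle hx
  have hbound : ∀ i, 0 ≤ s i ∧ e i ≤ l - 1 := by
    intro i
    have h1 := key i (Finset.mem_Icc.mpr ⟨le_refl _, hse i⟩)
    have h2 := key i (Finset.mem_Icc.mpr ⟨hse i, le_refl _⟩)
    rw [Finset.mem_Icc] at h1 h2
    exact ⟨h1.1, h2.2⟩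
  set i0 : Fin c := ⟨0, hc⟩
  have he0 : 0 ≤ e i0 := hs0 ▸ hse i0
  have he0l : e i0 ≤ l - 1 := (hbound i0).2
  have hkey : e i0 = l - 1 := by
    by_contra hne
    have hlt : e i0 < l - 1 := lt_of_le_of_ne he0l hne
    -- the point e i0 + 1 lies in [0, l-1], so some segment covers it
    have hmem : e i0 + 1 ∈ (Finset.Icc (0:ℤ) (l - 1)).val := by
      rw [← Finset.mem_def, Finset.mem_Icc]; omega
    rw [← hmulti, Multiset.mem_sum] at hmem
    obtain ⟨j, -, hj⟩ := hmem
    rw [← Finset.mem_def, Finset.mem_Icc] at hj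
    have hsj : s j ≠ 0 := by
      intro h0
      have := hmax j h0
      omega
    have hsj0 : 0 ≤ s j := (hbound j).1
    have hjne : i0 ≠ j := by
      intro h; rw [← h, hs0] at hsj; exact hsj rfl
    apply hnl i0 j hjne
    refine ⟨?_, ?_, 0, e j, ?_⟩
    · intro h
      have h0m : (0:ℤ) ∈ Finset.Icc (s i0) (e i0) := by
        rw [Finset.mem_Icc, hs0]; omega
      have := h h0m
      rw [Finset.mem_Icc] at this
      omega
    · intro h
      have := h (Finset.mem_Icc.mpr ⟨hse j, le_refl _⟩)
      rw [Finset.mem_Icc] at this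
      omega
    · ext x
      simp only [Finset.mem_union, Finset.mem_Icc, hs0]
      omega
  refine ⟨hkey, fun i => ⟨(hbound i).1, ?_⟩⟩
  rw [hkey]; exact (hbound i).2
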